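/- Let X ~ N(γ, σ_X²) and Z ~ N(γ, σ*²) be independent Gaussians, λ ≥ 0, I the indicator of {|Z| > λσ*}, and q = P(|Z| > λσ*). Then Var[X²σ_Y⁻² · I] = (w² + 6wv + 3v²) q − (w + v)² q², where w = γ²/σ_Y² and v = σ_X²/σ_Y². -/

import Mathlib

open MeasureTheory Real ProbabilityTheory
open scoped NNReal ENNReal

lemma integrable_pow_gauss {b : ℝ} (hb : 0 < b) (n : ℕ) :
    Integrable fun x : ℝ => x ^ n * Real.exp (-b * x ^ 2) := by
  have h : (-1 : ℝ) < n := lt_of_lt_of_le neg_one_lt_zero (Nat.cast_nonneg n)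
  simpa [Real.rpow_natCast] using integrable_rpow_mul_exp_neg_mul_sq hb h


lemma int_even_gauss {b : ℝ} (hb : 0 < b) (n : ℕ) :
    ∫ x : ℝ, x ^ (2 * n) * Real.exp (-b * x ^ 2) =
      b ^ (-(2 * (n:ℝ) + 1) / 2) * Gamma ((2 * (n:ℝ) + 1) / 2) := by
  calc ∫ x : ℝ, x ^ (2 * n) * Real.exp (-b * x ^ 2)
      = ∫ x : ℝ, |x| ^ (2 * n) * Real.exp (-b * |x| ^ 2) := by
        congr 1 with x
        rw [sq_abs, pow_mul, pow_mul, sq_abs]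
    _ = 2 * ∫ x in Set.Ioi (0:ℝ), x ^ (2 * n) * Real.exp (-b * x ^ 2) :=
        integral_comp_abs (f := fun t => t ^ (2 * n) * Real.exp (-b * t ^ 2))
    _ = 2 * ∫ x in Set.Ioi (0:ℝ), x ^ ((2 * n : ℕ) : ℝ) * Real.exp (-b * x ^ (2:ℝ)) := by
        congr 1
        refine integral_congr_ae (Filter.Eventually.of_forall fun x => ?_)
        simp only []
        rw [Real.rpow_natCast, Real.rpow_two]
    _ = _ := by
        rw [integral_rpow_mul_exp_neg_mul_rpow two_pos
          (lt_of_lt_of_le neg_one_lt_zero (Nat.cast_nonneg _)) hb]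
        push_cast
        ring

lemma int_odd_gauss {b : ℝ} (n : ℕ) :
    ∫ x : ℝ, x ^ (2 * n + 1) * Real.exp (-b * x ^ 2) = 0 := by
  set g : ℝ → ℝ := fun x => x ^ (2 * n + 1) * Real.exp (-b * x ^ 2) with hg
  have h1 : ∫ x : ℝ, g (-x) = ∫ x : ℝ, g x :=
    (Measure.measurePreserving_neg (volume : Measure ℝ)).integral_comp
      (Homeomorph.neg ℝ).measurableEmbedding g
  have h2 : ∀ x : ℝ, g (-x) = - g x := by
    intro x
    simp only [hg]
    rw [Odd.neg_pow ⟨n, by ring⟩, neg_sq]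
    ring
  simp_rw [h2, integral_neg] at h1
  linarith

lemma integral_gaussianReal_eq {v : ℝ≥0} (hv : v ≠ 0) (g : ℝ → ℝ) :
    ∫ x, g x ∂(gaussianReal 0 v) = ∫ x, gaussianPDFReal 0 v x * g x := by
  rw [gaussianReal_of_var_ne_zero _ hv]
  have h : (gaussianPDF 0 v)
      = fun x => ((Real.toNNReal (gaussianPDFReal 0 v x) : ℝ≥0) : ℝ≥0∞) := rfl
  rw [h, integral_withDensity_eq_integral_smul
    ((measurable_gaussianPDFReal 0 v).real_toNNReal) g]
  congr 1 with x
  simp [NNReal.smul_def, Real.coe_toNNReal _ (gaussianPDFReal_nonneg 0 v x)]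

lemma integrable_gaussianReal_iff {v : ℝ≥0} (hv : v ≠ 0) {g : ℝ → ℝ}
    (hm : Measurable g) :
    Integrable g (gaussianReal 0 v) ↔
      Integrable (fun x => gaussianPDFReal 0 v x * g x) volume := by
  rw [gaussianReal_of_var_ne_zero _ hv]
  have h : (gaussianPDF 0 v)
      = fun x => ((Real.toNNReal (gaussianPDFReal 0 v x) : ℝ≥0) : ℝ≥0∞) := rfl
  rw [h, integrable_withDensity_iff_integrable_smul
    ((measurable_gaussianPDFReal 0 v).real_toNNReal)]
  constructor <;> intro hI <;> refine hI.congr (Filter.Eventually.of_forall fun x => ?_) <;>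
    simp [NNReal.smul_def, Real.coe_toNNReal _ (gaussianPDFReal_nonneg 0 v x)]

section moments
variable {v : ℝ≥0} (hv : 0 < (v : ℝ))

lemma pdf_mul (n : ℕ) (x : ℝ) :
    gaussianPDFReal 0 v x * x ^ n =
      (Real.sqrt (2 * π * v))⁻¹ * (x ^ n * Real.exp (-(2 * (v:ℝ))⁻¹ * x ^ 2)) := by
  rw [gaussianPDFReal]
  have h : -(x - 0) ^ 2 / (2 * (v:ℝ)) = -(2 * (v:ℝ))⁻¹ * x ^ 2 := by ring
  rw [h]; ring

include hv

lemma integrable_pow_gaussianReal (n : ℕ) :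
    Integrable (fun x => x ^ n) (gaussianReal 0 v) := by
  rw [integrable_gaussianReal_iff (g := fun x => x ^ n) (by exact_mod_cast hv.ne') (measurable_id.pow_const n)]
  have := (integrable_pow_gauss (b := (2 * (v:ℝ))⁻¹) (by positivity) n).const_mul
    (Real.sqrt (2 * π * v))⁻¹
  exact this.congr (Filter.Eventually.of_forall fun x => (pdf_mul n x).symm)

lemma moment_odd_gaussianReal (n : ℕ) :
    ∫ x, x ^ (2 * n + 1) ∂(gaussianReal 0 v) = 0 := by
  have hne : v ≠ 0 := by exact_mod_cast hv.ne'
  rw [integral_gaussianReal_eq hne (fun x => x ^ (2 * n + 1))]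
  calc ∫ x, gaussianPDFReal 0 v x * x ^ (2 * n + 1)
      = ∫ x, (Real.sqrt (2 * π * v))⁻¹ *
          (x ^ (2 * n + 1) * Real.exp (-(2 * (v:ℝ))⁻¹ * x ^ 2)) := by
        refine integral_congr_ae (Filter.Eventually.of_forall fun x => ?_)
        exact pdf_mul _ x
    _ = (Real.sqrt (2 * π * v))⁻¹ *
          ∫ x, x ^ (2 * n + 1) * Real.exp (-(2 * (v:ℝ))⁻¹ * x ^ 2) := integral_const_mul _ _
    _ = 0 := by rw [int_odd_gauss]; ring

lemma moment_even_gaussianReal (n : ℕ) :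
    ∫ x, x ^ (2 * n) ∂(gaussianReal 0 v) =
      (Real.sqrt (2 * π * v))⁻¹ *
        ((2 * (v:ℝ))⁻¹ ^ (-(2 * (n:ℝ) + 1) / 2) * Real.Gamma ((2 * (n:ℝ) + 1) / 2)) := by
  have hne : v ≠ 0 := by exact_mod_cast hv.ne'
  rw [integral_gaussianReal_eq hne (fun x => x ^ (2 * n))]
  calc ∫ x, gaussianPDFReal 0 v x * x ^ (2 * n)
      = ∫ x, (Real.sqrt (2 * π * v))⁻¹ *
          (x ^ (2 * n) * Real.exp (-(2 * (v:ℝ))⁻¹ * x ^ 2)) := by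
        refine integral_congr_ae (Filter.Eventually.of_forall fun x => ?_)
        exact pdf_mul _ x
    _ = (Real.sqrt (2 * π * v))⁻¹ *
          ∫ x, x ^ (2 * n) * Real.exp (-(2 * (v:ℝ))⁻¹ * x ^ 2) := integral_const_mul _ _
    _ = _ := by rw [int_even_gauss (by positivity) n]

lemma moment_two_gaussianReal : ∫ x, x ^ 2 ∂(gaussianReal 0 v) = v := by
  have h := moment_even_gaussianReal hv 1
  norm_num only at h
  rw [h]
  have h2v : (0:ℝ) < 2 * v := by positivity
  have e1 : ((2 * (v:ℝ))⁻¹) ^ (-(3/2) : ℝ) = (2 * (v:ℝ)) ^ ((3:ℝ)/2) := by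
    rw [Real.inv_rpow h2v.le, ← Real.rpow_neg h2v.le]
    norm_num
  have e2 : (2 * (v:ℝ)) ^ ((3:ℝ)/2) = (2 * v) * Real.sqrt (2 * v) := by
    rw [show (3:ℝ)/2 = 1 + 1/2 by norm_num, Real.rpow_add h2v, Real.rpow_one,
      ← Real.sqrt_eq_rpow]
  have hG : Real.Gamma (3/2) = (1/2) * Real.sqrt π := by
    rw [show (3/2 : ℝ) = 1/2 + 1 by norm_num, Real.Gamma_add_one (by norm_num),
      Real.Gamma_one_half_eq]
  have hs : Real.sqrt (2 * π * v) = Real.sqrt π * Real.sqrt (2 * v) := by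
    rw [show 2 * π * (v:ℝ) = π * (2 * v) by ring, Real.sqrt_mul Real.pi_pos.le]
  have hsp : (0:ℝ) < Real.sqrt π := Real.sqrt_pos.mpr Real.pi_pos
  have hs2 : (0:ℝ) < Real.sqrt (2 * v) := Real.sqrt_pos.mpr h2v
  rw [e1, e2, hG, hs]
  field_simp

lemma moment_four_gaussianReal : ∫ x, x ^ 4 ∂(gaussianReal 0 v) = 3 * (v:ℝ) ^ 2 := by
  have h := moment_even_gaussianReal hv 2
  norm_num only at h
  rw [h]
  have h2v : (0:ℝ) < 2 * v := by positivity
  have e1 : ((2 * (v:ℝ))⁻¹) ^ (-(5/2) : ℝ) = (2 * (v:ℝ)) ^ ((5:ℝ)/2) := by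
    rw [Real.inv_rpow h2v.le, ← Real.rpow_neg h2v.le]
    norm_num
  have e2 : (2 * (v:ℝ)) ^ ((5:ℝ)/2) = (2 * v) ^ 2 * Real.sqrt (2 * v) := by
    rw [show (5:ℝ)/2 = 2 + 1/2 by norm_num, Real.rpow_add h2v, ← Real.sqrt_eq_rpow,
      Real.rpow_two]
  have hG : Real.Gamma (5/2) = (3/4) * Real.sqrt π := by
    rw [show (5/2 : ℝ) = 3/2 + 1 by norm_num, Real.Gamma_add_one (by norm_num),
      show (3/2 : ℝ) = 1/2 + 1 by norm_num, Real.Gamma_add_one (by norm_num),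
      Real.Gamma_one_half_eq]
    ring
  have hs : Real.sqrt (2 * π * v) = Real.sqrt π * Real.sqrt (2 * v) := by
    rw [show 2 * π * (v:ℝ) = π * (2 * v) by ring, Real.sqrt_mul Real.pi_pos.le]
  have hsp : (0:ℝ) < Real.sqrt π := Real.sqrt_pos.mpr Real.pi_pos
  have hs2 : (0:ℝ) < Real.sqrt (2 * v) := Real.sqrt_pos.mpr h2v
  rw [e1, e2, hG, hs]
  field_simp
  ring

lemma integrable_shift_pow (μ : ℝ) (n : ℕ) :
    Integrable (fun y => (μ + y) ^ n) (gaussianReal 0 v) := by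
  have h : (fun y : ℝ => (μ + y) ^ n)
      = fun y => ∑ k ∈ Finset.range (n + 1), (μ ^ k * (n.choose k : ℝ)) * y ^ (n - k) := by
    funext y
    rw [add_pow]
    exact Finset.sum_congr rfl (fun k _ => by ring)
  rw [h]
  exact integrable_finset_sum _ fun k _ => (integrable_pow_gaussianReal hv _).const_mul _

omit hv in
lemma map_shift (μ : ℝ) : gaussianReal μ v = (gaussianReal 0 v).map (μ + ·) := by
  rw [gaussianReal_map_const_add, zero_add]

lemma integrable_pow_gaussianReal' (μ : ℝ) (n : ℕ) :
    Integrable (fun x => x ^ n) (gaussianReal μ v) := by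
  rw [map_shift μ, integrable_map_measure (by fun_prop) (by fun_prop)]
  exact integrable_shift_pow hv μ n

lemma moment_sq_gaussianReal' (μ : ℝ) :
    ∫ x, x ^ 2 ∂(gaussianReal μ v) = μ ^ 2 + (v : ℝ) := by
  rw [map_shift μ, integral_map (by fun_prop) (by fun_prop)]
  have h : (fun y : ℝ => (μ + y) ^ 2) = fun y => μ ^ 2 + 2 * μ * y + y ^ 2 := by
    funext y; ring
  show ∫ y, (μ + y) ^ 2 ∂(gaussianReal 0 v) = _
  rw [h]
  have i1 : Integrable (fun y : ℝ => 2 * μ * y) (gaussianReal 0 v) := by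
    simpa using (integrable_pow_gaussianReal hv 1).const_mul (2 * μ)
  have i2 : Integrable (fun y : ℝ => y ^ 2) (gaussianReal 0 v) :=
    integrable_pow_gaussianReal hv 2
  have iC : Integrable (fun y : ℝ => μ ^ 2 + 2 * μ * y) (gaussianReal 0 v) :=
    (integrable_const _).add i1
  rw [integral_add iC i2, integral_add (integrable_const _) i1, integral_const]
  have h1 : ∫ a, a ∂(gaussianReal 0 v) = 0 := by
    simpa using moment_odd_gaussianReal hv 0
  have hm1 : ∫ y, 2 * μ * y ∂(gaussianReal 0 v) = 0 := by
    rw [integral_const_mul, h1, mul_zero]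
  rw [hm1, moment_two_gaussianReal hv]
  simp

lemma moment_four_gaussianReal' (μ : ℝ) :
    ∫ x, x ^ 4 ∂(gaussianReal μ v) = μ ^ 4 + 6 * μ ^ 2 * (v : ℝ) + 3 * (v : ℝ) ^ 2 := by
  rw [map_shift μ, integral_map (by fun_prop) (by fun_prop)]
  have h : (fun y : ℝ => (μ + y) ^ 4)
      = fun y => μ ^ 4 + 4 * μ ^ 3 * y + 6 * μ ^ 2 * y ^ 2 + (4 * μ * y ^ 3 + y ^ 4) := by
    funext y; ring
  show ∫ y, (μ + y) ^ 4 ∂(gaussianReal 0 v) = _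
  rw [h]
  have p1 := integrable_pow_gaussianReal hv 1
  have p2 := integrable_pow_gaussianReal hv 2
  have p3 := integrable_pow_gaussianReal hv 3
  have p4 := integrable_pow_gaussianReal hv 4
  have i1 : Integrable (fun y : ℝ => 4 * μ ^ 3 * y) (gaussianReal 0 v) := by
    simpa using p1.const_mul (4 * μ ^ 3)
  have i2 : Integrable (fun y : ℝ => 6 * μ ^ 2 * y ^ 2) (gaussianReal 0 v) :=
    p2.const_mul _
  have i3 : Integrable (fun y : ℝ => 4 * μ * y ^ 3) (gaussianReal 0 v) :=
    p3.const_mul _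
  have iC : Integrable (fun y : ℝ => μ ^ 4 + 4 * μ ^ 3 * y) (gaussianReal 0 v) :=
    (integrable_const _).add i1
  have iD : Integrable (fun y : ℝ => μ ^ 4 + 4 * μ ^ 3 * y + 6 * μ ^ 2 * y ^ 2)
      (gaussianReal 0 v) := iC.add i2
  have iE : Integrable (fun y : ℝ => 4 * μ * y ^ 3 + y ^ 4) (gaussianReal 0 v) := i3.add p4
  rw [integral_add iD iE, integral_add iC i2,
    integral_add (integrable_const _) i1,
    integral_add i3 p4, integral_const]
  have h1 : ∫ a, a ∂(gaussianReal 0 v) = 0 := by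
    simpa using moment_odd_gaussianReal hv 0
  have h3 : ∫ a, a ^ 3 ∂(gaussianReal 0 v) = 0 := by
    have := moment_odd_gaussianReal hv 1
    norm_num only at this
    exact this
  have hm1 : ∫ y, (4 * μ ^ 3) * y ∂(gaussianReal 0 v) = 0 := by
    rw [integral_const_mul, h1, mul_zero]
  have hm3 : ∫ y, (4 * μ) * y ^ 3 ∂(gaussianReal 0 v) = 0 := by
    rw [integral_const_mul, h3, mul_zero]
  have hm2 : ∫ y, (6 * μ ^ 2) * y ^ 2 ∂(gaussianReal 0 v) = 6 * μ ^ 2 * (v : ℝ) := by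
    rw [integral_const_mul, moment_two_gaussianReal hv]
  rw [hm1, hm3, hm2, moment_four_gaussianReal hv]
  simp

end moments

theorem stmt_8 {Ω : Type*} [MeasureSpace Ω] [IsProbabilityMeasure (ℙ : Measure Ω)]
    (γ σX σY σs l : ℝ) (hσX : 0 < σX) (hσY : 0 < σY) (hσs : 0 < σs) (hl : 0 ≤ l)
    (X Z : Ω → ℝ) (hXm : Measurable X) (hZm : Measurable Z)
    (hX : Measure.map X ℙ = gaussianReal γ (Real.toNNReal (σX ^ 2)))
    (hZ : Measure.map Z ℙ = gaussianReal γ (Real.toNNReal (σs ^ 2)))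
    (hind : IndepFun X Z ℙ) :
    variance (fun ω => X ω ^ 2 / σY ^ 2 *
        Set.indicator {ω' : Ω | l * σs < |Z ω'|} (fun _ => (1 : ℝ)) ω) ℙ =
      ((γ ^ 2 / σY ^ 2) ^ 2 + 6 * (γ ^ 2 / σY ^ 2) * (σX ^ 2 / σY ^ 2) +
          3 * (σX ^ 2 / σY ^ 2) ^ 2) * (ℙ {ω | l * σs < |Z ω|}).toReal -
        (γ ^ 2 / σY ^ 2 + σX ^ 2 / σY ^ 2) ^ 2 * (ℙ {ω | l * σs < |Z ω|}).toReal ^ 2 := by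
  have hσY2 : (σY : ℝ) ^ 2 ≠ 0 := by positivity
  have hvXr : ((Real.toNNReal (σX ^ 2) : ℝ≥0) : ℝ) = σX ^ 2 :=
    Real.coe_toNNReal _ (sq_nonneg σX)
  have hvXpos : 0 < ((Real.toNNReal (σX ^ 2) : ℝ≥0) : ℝ) := by
    rw [hvXr]; positivity
  set S : Set ℝ := {x : ℝ | l * σs < |x|} with hS
  have hSm : MeasurableSet S := measurableSet_lt measurable_const measurable_abs
  set A : Set Ω := {ω | l * σs < |Z ω|} with hA
  have hAm : MeasurableSet A := measurableSet_lt measurable_const hZm.abs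
  set q : ℝ := (ℙ A).toReal with hq
  set φ : ℝ → ℝ := fun x => x ^ 2 / σY ^ 2 with hφ
  set φ2 : ℝ → ℝ := fun x => (x ^ 2 / σY ^ 2) ^ 2 with hφ2
  set ψ : ℝ → ℝ := S.indicator (fun _ => 1) with hψ
  have hφm : Measurable φ := (measurable_id.pow_const 2).div_const _
  have hφ2m : Measurable φ2 := hφm.pow_const 2
  have hψm : Measurable ψ := measurable_const.indicator hSm
  have hψ01 : ∀ x, ψ x = 0 ∨ ψ x = 1 := by
    intro x
    by_cases h : x ∈ S <;> simp [hψ, h]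
  have hfeq : (fun ω => X ω ^ 2 / σY ^ 2 *
      Set.indicator {ω' : Ω | l * σs < |Z ω'|} (fun _ => (1 : ℝ)) ω)
      = fun ω => φ (X ω) * ψ (Z ω) := by
    funext ω
    simp only [hφ, hψ, Set.indicator_apply, Set.mem_setOf_eq]
    rfl
  rw [hfeq]
  -- integrability of powers of X
  have hX2 : Integrable (fun ω => X ω ^ 2) ℙ := by
    have h := integrable_pow_gaussianReal' hvXpos γ 2
    rw [← hX] at h
    exact (integrable_map_measure (by fun_prop) hXm.aemeasurable).mp h
  have hX4 : Integrable (fun ω => X ω ^ 4) ℙ := by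
    have h := integrable_pow_gaussianReal' hvXpos γ 4
    rw [← hX] at h
    exact (integrable_map_measure (by fun_prop) hXm.aemeasurable).mp h
  have hfm : AEStronglyMeasurable (fun ω => φ (X ω) * ψ (Z ω)) ℙ :=
    ((hφm.comp hXm).mul (hψm.comp hZm)).aestronglyMeasurable
  have hfm0 : Measurable (fun ω => φ (X ω) * ψ (Z ω)) :=
    (hφm.comp hXm).mul (hψm.comp hZm)
  have hf2_int : Integrable (fun ω => (φ (X ω) * ψ (Z ω)) ^ 2) ℙ := by
    refine (hX4.div_const ((σY ^ 2) ^ 2)).mono' (hfm0.pow_const 2).aestronglyMeasurable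
      (Filter.Eventually.of_forall fun ω => ?_)
    rcases hψ01 (Z ω) with h | h <;> rw [h]
    · simp only [mul_zero, ne_eq, OfNat.ofNat_ne_zero, not_false_eq_true, zero_pow, norm_zero]
      positivity
    · rw [mul_one, Real.norm_eq_abs, abs_of_nonneg (by positivity)]
      apply le_of_eq
      simp only [hφ]
      field_simp
  have hf_int : Integrable (fun ω => φ (X ω) * ψ (Z ω)) ℙ := by
    refine (hX2.div_const (σY ^ 2)).mono' hfm (Filter.Eventually.of_forall fun ω => ?_)
    rcases hψ01 (Z ω) with h | h <;> rw [h]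
    · simp only [mul_zero, norm_zero]
      positivity
    · rw [mul_one, Real.norm_eq_abs, abs_of_nonneg (by positivity)]
  have hmem : MemLp (fun ω => φ (X ω) * ψ (Z ω)) 2 ℙ :=
    (memLp_two_iff_integrable_sq hfm).mpr hf2_int
  rw [variance_eq_sub hmem]
  have hind1 : IndepFun (fun ω => φ (X ω)) (fun ω => ψ (Z ω)) ℙ := hind.comp hφm hψm
  have hind2 : IndepFun (fun ω => φ2 (X ω)) (fun ω => ψ (Z ω)) ℙ := hind.comp hφ2m hψm
  have hEψ : ∫ ω, ψ (Z ω) ∂ℙ = q := by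
    have h : (fun ω => ψ (Z ω)) = A.indicator (fun _ => (1:ℝ)) := by
      funext ω
      simp only [hψ, hA, Set.indicator_apply, Set.mem_setOf_eq]
      rfl
    rw [h]
    exact integral_indicator_one hAm
  have hEφ : ∫ ω, φ (X ω) ∂ℙ = (γ ^ 2 + σX ^ 2) / σY ^ 2 := by
    rw [show ∫ ω, φ (X ω) ∂ℙ = ∫ x, φ x ∂(Measure.map X ℙ) from
      (integral_map hXm.aemeasurable hφm.aestronglyMeasurable).symm, hX]
    simp only [hφ, div_eq_mul_inv]
    rw [integral_mul_const, moment_sq_gaussianReal' hvXpos γ, hvXr]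
  have hEφ2 : ∫ ω, φ2 (X ω) ∂ℙ
      = (γ ^ 4 + 6 * γ ^ 2 * σX ^ 2 + 3 * σX ^ 4) / (σY ^ 2) ^ 2 := by
    rw [show ∫ ω, φ2 (X ω) ∂ℙ = ∫ x, φ2 x ∂(Measure.map X ℙ) from
      (integral_map hXm.aemeasurable hφ2m.aestronglyMeasurable).symm, hX]
    have h : φ2 = fun x => x ^ 4 * ((σY ^ 2) ^ 2)⁻¹ := by
      funext x
      simp only [hφ2]
      field_simp
    rw [h, integral_mul_const, moment_four_gaussianReal' hvXpos γ, hvXr]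
    field_simp
  have hmul1 : ∫ ω, φ (X ω) * ψ (Z ω) ∂ℙ = ((γ ^ 2 + σX ^ 2) / σY ^ 2) * q := by
    rw [← hEφ, ← hEψ]
    exact hind1.integral_fun_mul_eq_mul_integral (hφm.comp hXm).aestronglyMeasurable
      (hψm.comp hZm).aestronglyMeasurable
  have hmul2 : ∫ ω, (φ (X ω) * ψ (Z ω)) ^ 2 ∂ℙ
      = ((γ ^ 4 + 6 * γ ^ 2 * σX ^ 2 + 3 * σX ^ 4) / (σY ^ 2) ^ 2) * q := by
    have hsq : (fun ω => (φ (X ω) * ψ (Z ω)) ^ 2) = fun ω => φ2 (X ω) * ψ (Z ω) := by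
      funext ω
      rcases hψ01 (Z ω) with h | h <;> rw [h] <;> simp [hφ2, hφ]
    rw [hsq, ← hEφ2, ← hEψ]
    exact hind2.integral_fun_mul_eq_mul_integral (hφ2m.comp hXm).aestronglyMeasurable
      (hψm.comp hZm).aestronglyMeasurable
  have hpow : ∫ a, ((fun ω => φ (X ω) * ψ (Z ω)) ^ 2) a ∂ℙ
      = ∫ ω, (φ (X ω) * ψ (Z ω)) ^ 2 ∂ℙ := rfl
  rw [hpow, hmul1, hmul2]
  field_simp
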